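/- With the normalisation T²(1) = sgn(g) = −sgn(γ), the square of the quantum Hodge operator is totally degenerate with the same degeneracy as the antisymmetrisers: suppose α, γ ∈ ℝ are nonzero, β = q⁶ α, and m ∈ ℝ satisfies 6 q⁴ λ₃⁻¹ m² α β γ = sgn(γ). Then T(T(x)) = −sgn(γ) · x for all x ∈ Λ⁰ ⊕ Λ³, and T(T(x)) = −sgn(γ) · (2λ₃)/(6 q⁴ λ₂) · x for all x ∈ Λ¹ ⊕ Λ². -/
import Mathlib


open TensorProduct

noncomputable section

/-- The 3-dimensional complex vector space with basis `ω 0 = ω₋`, `ω 1 = ω₊`, `ω 2 = ω_z`. -/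
abbrev V : Type := Fin 3 → ℂ

/-- The distinguished basis `(ω₋, ω₊, ω_z)` of `V`. -/
def ω : Fin 3 → V := fun i => Pi.basisFun ℂ (Fin 3) i

/-- The degree-2 relations of the exterior algebra of the 3d calculus: each generator is
set equal to `0`.  `RingQuot` of this relation is the quotient of the tensor algebra by the
two-sided ideal generated by the six elements. -/
inductive rel (q : ℝ) : TensorAlgebra ℂ V → TensorAlgebra ℂ V → Prop
  | mm : rel q (TensorAlgebra.ι ℂ (ω 0) * TensorAlgebra.ι ℂ (ω 0)) 0
  | pp : rel q (TensorAlgebra.ι ℂ (ω 1) * TensorAlgebra.ι ℂ (ω 1)) 0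
  | zz : rel q (TensorAlgebra.ι ℂ (ω 2) * TensorAlgebra.ι ℂ (ω 2)) 0
  | mp : rel q (TensorAlgebra.ι ℂ (ω 0) * TensorAlgebra.ι ℂ (ω 1) +
      ((q : ℂ) ^ 2)⁻¹ • (TensorAlgebra.ι ℂ (ω 1) * TensorAlgebra.ι ℂ (ω 0))) 0
  | zm : rel q (TensorAlgebra.ι ℂ (ω 2) * TensorAlgebra.ι ℂ (ω 0) +
      (q : ℂ) ^ 4 • (TensorAlgebra.ι ℂ (ω 0) * TensorAlgebra.ι ℂ (ω 2))) 0
  | zp : rel q (TensorAlgebra.ι ℂ (ω 2) * TensorAlgebra.ι ℂ (ω 1) +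
      ((q : ℂ) ^ 4)⁻¹ • (TensorAlgebra.ι ℂ (ω 1) * TensorAlgebra.ι ℂ (ω 2))) 0

/-- The exterior algebra `Λ` of the 3d calculus. -/
abbrev Lam (q : ℝ) : Type := RingQuot (rel q)

/-- The quotient map `T(V) → Λ`. -/
def mkL (q : ℝ) : TensorAlgebra ℂ V →ₐ[ℂ] Lam q := RingQuot.mkAlgHom ℂ (rel q)

/-- The degree-`k` component `Λᵏ` of `Λ`: the image of the `k`-th power of the degree-1
part of the tensor algebra (the grading induced from the tensor algebra). -/
def gradeL (q : ℝ) (k : ℕ) : Submodule ℂ (Lam q) :=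
  Submodule.map (mkL q).toLinearMap
    ((LinearMap.range (TensorAlgebra.ι ℂ : V →ₗ[ℂ] TensorAlgebra ℂ V)) ^ k)

/-- The images `ω₋, ω₊, ω_z` of the basis 1-forms in `Λ¹`. -/
def ωL (q : ℝ) (a : Fin 3) : Lam q := mkL q (TensorAlgebra.ι ℂ (ω a))

/-- `f₋ = ω₋∧ω_z ∈ Λ²`. -/
def fm (q : ℝ) : Lam q := mkL q (TensorAlgebra.ι ℂ (ω 0) * TensorAlgebra.ι ℂ (ω 2))

/-- `f₊ = ω₊∧ω_z ∈ Λ²`. -/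
def fp (q : ℝ) : Lam q := mkL q (TensorAlgebra.ι ℂ (ω 1) * TensorAlgebra.ι ℂ (ω 2))

/-- `f_z = ω₋∧ω₊ ∈ Λ²`. -/
def fz (q : ℝ) : Lam q := mkL q (TensorAlgebra.ι ℂ (ω 0) * TensorAlgebra.ι ℂ (ω 1))

/-- The top form `θ = ω₋∧ω₊∧ω_z ∈ Λ³`. -/
def θL (q : ℝ) : Lam q :=
  mkL q (TensorAlgebra.ι ℂ (ω 0) * TensorAlgebra.ι ℂ (ω 1) * TensorAlgebra.ι ℂ (ω 2))

/-- `λ₂ = 1 + q²`. -/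
def lam2 (q : ℝ) : ℂ := 1 + (q : ℂ) ^ 2

/-- `λ₃ = 1 + 2q² + 2q⁴ + q⁶`. -/
def lam3 (q : ℝ) : ℂ := 1 + 2 * (q : ℂ) ^ 2 + 2 * (q : ℂ) ^ 4 + (q : ℂ) ^ 6

/-- `T : Λ → Λ` is the Hodge operator of the left-invariant contraction
`g(ω₋,ω₊) = α`, `g(ω₊,ω₋) = β`, `g(ω_z,ω_z) = γ` with volume form `μ = mθ`: these
equations pin down `T` on the basis `1, ω₋, ω₊, ω_z, f₋, f₊, f_z, θ` of `Λ`. -/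
def IsHodge (q : ℝ) (α β γ m : ℂ) (T : Lam q →ₗ[ℂ] Lam q) : Prop :=
  T 1 = m • θL q ∧
  T (ωL q 0) = (-(((q : ℂ) ^ 2)⁻¹ * m * β)) • fm q ∧
  T (ωL q 1) = (m * α) • fp q ∧
  T (ωL q 2) = (m * γ) • fz q ∧
  T (fm q) = (2 * ((q : ℂ) ^ 4)⁻¹ * (lam2 q)⁻¹ * m * β * γ) • ωL q 0 ∧
  T (fp q) = (-(2 * (q : ℂ) ^ 6 * (lam2 q)⁻¹ * m * α * γ)) • ωL q 1 ∧
  T (fz q) = (-(2 * (lam2 q)⁻¹ * m * α * β)) • ωL q 2 ∧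
  T (θL q) = (-(6 * (q : ℂ) ^ 4 * (lam3 q)⁻¹ * m * α * β * γ)) • (1 : Lam q)

namespace HodgeAux

variable (q : ℝ)

lemma mk_rel {a b : TensorAlgebra ℂ V} (h : rel q a b) : mkL q a = mkL q b :=
  RingQuot.mkAlgHom_rel ℂ h

lemma r00 : ωL q 0 * ωL q 0 = 0 := by
  have h := mk_rel q rel.mm
  rw [map_zero] at h
  rw [ωL, ← map_mul, h]

lemma r11 : ωL q 1 * ωL q 1 = 0 := by
  have h := mk_rel q rel.pp
  rw [map_zero] at h
  rw [ωL, ← map_mul, h]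

lemma r22 : ωL q 2 * ωL q 2 = 0 := by
  have h := mk_rel q rel.zz
  rw [map_zero] at h
  rw [ωL, ← map_mul, h]

lemma r01 : ωL q 0 * ωL q 1 = fz q := by rw [ωL, ωL, fz, map_mul]

lemma r02 : ωL q 0 * ωL q 2 = fm q := by rw [ωL, ωL, fm, map_mul]

lemma r12 : ωL q 1 * ωL q 2 = fp q := by rw [ωL, ωL, fp, map_mul]

lemma r10 (hq : (q : ℂ) ≠ 0) : ωL q 1 * ωL q 0 = (-(q : ℂ) ^ 2) • fz q := by
  have h := mk_rel q rel.mp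
  rw [map_zero, map_add, map_smul, map_mul, map_mul] at h
  have h2 : (((q : ℂ) ^ 2)⁻¹) • (ωL q 1 * ωL q 0) = -(fz q) := by
    rw [← r01, ωL, ωL]
    exact eq_neg_of_add_eq_zero_right h
  calc ωL q 1 * ωL q 0
      = ((q : ℂ) ^ 2) • (((q : ℂ) ^ 2)⁻¹ • (ωL q 1 * ωL q 0)) := by
        rw [smul_smul, mul_inv_cancel₀ (pow_ne_zero 2 hq), one_smul]
    _ = (-(q : ℂ) ^ 2) • fz q := by rw [h2, smul_neg, ← neg_smul]

lemma r20 : ωL q 2 * ωL q 0 = (-(q : ℂ) ^ 4) • fm q := by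
  have h := mk_rel q rel.zm
  rw [map_zero, map_add, map_smul, map_mul, map_mul] at h
  have h2 := eq_neg_of_add_eq_zero_left h
  calc ωL q 2 * ωL q 0 = -((q : ℂ) ^ 4 • (ωL q 0 * ωL q 2)) := h2
    _ = (-(q : ℂ) ^ 4) • fm q := by rw [r02]; module

lemma r21 : ωL q 2 * ωL q 1 = (-((q : ℂ) ^ 4)⁻¹) • fp q := by
  have h := mk_rel q rel.zp
  rw [map_zero, map_add, map_smul, map_mul, map_mul] at h
  have h2 := eq_neg_of_add_eq_zero_left h
  calc ωL q 2 * ωL q 1 = -(((q : ℂ) ^ 4)⁻¹ • (ωL q 1 * ωL q 2)) := h2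
    _ = (-((q : ℂ) ^ 4)⁻¹) • fp q := by rw [r12]; module

lemma t_fz2 : fz q * ωL q 2 = θL q := by rw [fz, ωL, θL, ← map_mul]

lemma t_fz0 (hq : (q : ℂ) ≠ 0) : fz q * ωL q 0 = 0 := by
  rw [← r01, mul_assoc, r10 q hq, mul_smul_comm, ← r01, ← mul_assoc, r00, zero_mul,
    smul_zero]

lemma t_fz1 : fz q * ωL q 1 = 0 := by
  rw [← r01, mul_assoc, r11, mul_zero]

lemma t_fm0 : fm q * ωL q 0 = 0 := by
  rw [← r02, mul_assoc, r20, mul_smul_comm, ← r02, ← mul_assoc, r00, zero_mul, smul_zero]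

lemma t_fm1 : fm q * ωL q 1 = (-((q : ℂ) ^ 4)⁻¹) • θL q := by
  rw [← r02, mul_assoc, r21, mul_smul_comm, ← r12, ← mul_assoc, r01, t_fz2]

lemma t_fm2 : fm q * ωL q 2 = 0 := by
  rw [← r02, mul_assoc, r22, mul_zero]

lemma t_fp0 (hq : (q : ℂ) ≠ 0) : fp q * ωL q 0 = ((q : ℂ) ^ 6) • θL q := by
  rw [← r12, mul_assoc, r20, mul_smul_comm, ← r02, ← mul_assoc, r10 q hq, smul_mul_assoc,
    t_fz2, smul_smul]
  congr 1
  ring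

lemma t_fp1 : fp q * ωL q 1 = 0 := by
  rw [← r12, mul_assoc, r21, mul_smul_comm, ← r12, ← mul_assoc, r11, zero_mul, smul_zero]

lemma t_fp2 : fp q * ωL q 2 = 0 := by
  rw [← r12, mul_assoc, r22, mul_zero]

lemma map_range : Submodule.map (mkL q).toLinearMap
    (LinearMap.range (TensorAlgebra.ι ℂ : V →ₗ[ℂ] TensorAlgebra ℂ V)) =
    Submodule.span ℂ (Set.range (ωL q)) := by
  rw [LinearMap.range_eq_map, ← (Pi.basisFun ℂ (Fin 3)).span_eq, Submodule.map_span,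
    Submodule.map_span, ← Set.range_comp, ← Set.range_comp]
  rfl

lemma grade0_eq : gradeL q 0 = Submodule.span ℂ {(1 : Lam q)} := by
  rw [gradeL, pow_zero, Submodule.map_one, Submodule.one_eq_span]

lemma grade1_eq : gradeL q 1 = Submodule.span ℂ (Set.range (ωL q)) := by
  rw [gradeL, pow_one, map_range]

lemma W2_le (hq : (q : ℂ) ≠ 0) :
    Submodule.span ℂ (Set.range (ωL q)) ^ 2 ≤ Submodule.span ℂ {fm q, fp q, fz q} := by
  rw [sq, Submodule.span_mul_span, Submodule.span_le]
  rintro x hx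
  rw [Set.mem_mul] at hx
  obtain ⟨a, ⟨i, rfl⟩, b, ⟨j, rfl⟩, rfl⟩ := hx
  rw [SetLike.mem_coe]
  fin_cases i <;> fin_cases j <;>
    simp only [Fin.isValue, Fin.mk_zero, Fin.mk_one,
      show (⟨2, by norm_num⟩ : Fin 3) = (2 : Fin 3) from rfl] <;>
    first
      | (rw [r00]; exact Submodule.zero_mem _)
      | (rw [r11]; exact Submodule.zero_mem _)
      | (rw [r22]; exact Submodule.zero_mem _)
      | (rw [r01]; exact Submodule.subset_span (by simp))
      | (rw [r02]; exact Submodule.subset_span (by simp))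
      | (rw [r12]; exact Submodule.subset_span (by simp))
      | (rw [r10 q hq]; exact Submodule.smul_mem _ _ (Submodule.subset_span (by simp)))
      | (rw [r20]; exact Submodule.smul_mem _ _ (Submodule.subset_span (by simp)))
      | (rw [r21]; exact Submodule.smul_mem _ _ (Submodule.subset_span (by simp)))

lemma grade2_le (hq : (q : ℂ) ≠ 0) :
    gradeL q 2 ≤ Submodule.span ℂ {fm q, fp q, fz q} := by
  rw [gradeL, Submodule.map_pow, map_range]
  exact W2_le q hq

lemma grade3_le (hq : (q : ℂ) ≠ 0) : gradeL q 3 ≤ Submodule.span ℂ {θL q} := by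
  rw [gradeL, Submodule.map_pow, map_range, pow_succ]
  refine le_trans (mul_le_mul' (W2_le q hq) le_rfl) ?_
  rw [Submodule.span_mul_span, Submodule.span_le]
  rintro x hx
  rw [Set.mem_mul] at hx
  obtain ⟨a, ha, b, ⟨i, rfl⟩, rfl⟩ := hx
  rw [SetLike.mem_coe]
  simp only [Set.mem_insert_iff, Set.mem_singleton_iff] at ha
  rcases ha with rfl | rfl | rfl <;> fin_cases i <;>
    simp only [Fin.isValue, Fin.mk_zero, Fin.mk_one,
      show (⟨2, by norm_num⟩ : Fin 3) = (2 : Fin 3) from rfl] <;>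
    first
      | (rw [t_fm0]; exact Submodule.zero_mem _)
      | (rw [t_fm2]; exact Submodule.zero_mem _)
      | (rw [t_fp1]; exact Submodule.zero_mem _)
      | (rw [t_fp2]; exact Submodule.zero_mem _)
      | (rw [t_fz0 q hq]; exact Submodule.zero_mem _)
      | (rw [t_fz1]; exact Submodule.zero_mem _)
      | (rw [t_fz2]; exact Submodule.subset_span (by simp))
      | (rw [t_fm1]; exact Submodule.smul_mem _ _ (Submodule.subset_span (by simp)))
      | (rw [t_fp0 q hq]; exact Submodule.smul_mem _ _ (Submodule.subset_span (by simp)))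

end HodgeAux

/-- with `α, γ ∈ ℝ` nonzero, `β = q⁶α` and the normalisation
`T²(1) = sgn(g) = −sgn(γ)` (i.e. `6q⁴λ₃⁻¹m²αβγ = sgn(γ)`), the square of the quantum Hodge
operator is `−sgn(γ)` on `Λ⁰ ⊕ Λ³` and `−sgn(γ)·2λ₃/(6q⁴λ₂)` on `Λ¹ ⊕ Λ²`. -/
theorem hodge_square_degenerate (q : ℝ) (hq0 : 0 < q) (hq1 : q < 1)
    (α γ m : ℝ) (β : ℂ) (hα : α ≠ 0) (hγ : γ ≠ 0)
    (hβ : β = (q : ℂ) ^ 6 * (α : ℂ))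
    (hnorm : 6 * (q : ℂ) ^ 4 * (lam3 q)⁻¹ * (m : ℂ) ^ 2 * (α : ℂ) * β * (γ : ℂ) =
      (Real.sign γ : ℂ))
    (T : Lam q →ₗ[ℂ] Lam q) (hT : IsHodge q (α : ℂ) β (γ : ℂ) (m : ℂ) T) :
    (∀ x ∈ gradeL q 0 ⊔ gradeL q 3, T (T x) = (-(Real.sign γ : ℂ)) • x) ∧
    (∀ x ∈ gradeL q 1 ⊔ gradeL q 2,
      T (T x) = (-(Real.sign γ : ℂ) * (2 * lam3 q) / (6 * (q : ℂ) ^ 4 * lam2 q)) • x) := by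
  obtain ⟨h1, hw0, hw1, hw2, hfm, hfp, hfz, hθ⟩ := hT
  have hq : (q : ℂ) ≠ 0 := by exact_mod_cast hq0.ne'
  have hl2 : lam2 q ≠ 0 := by
    have e : lam2 q = ((1 + q ^ 2 : ℝ) : ℂ) := by rw [lam2]; push_cast; ring
    rw [e]
    exact_mod_cast (by positivity : (0:ℝ) < 1 + q ^ 2).ne'
  have hl3 : lam3 q ≠ 0 := by
    have e : lam3 q = ((1 + 2 * q ^ 2 + 2 * q ^ 4 + q ^ 6 : ℝ) : ℂ) := by
      rw [lam3]; push_cast; ring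
    rw [e]
    exact_mod_cast (by positivity : (0:ℝ) < 1 + 2 * q ^ 2 + 2 * q ^ 4 + q ^ 6).ne'
  set s : ℂ := ((Real.sign γ : ℝ) : ℂ) with hs
  set c2 : ℂ := -s * (2 * lam3 q) / (6 * (q : ℂ) ^ 4 * lam2 q) with hc2
  -- scalar identities
  have c1a : (m : ℂ) * (-(6 * (q : ℂ) ^ 4 * (lam3 q)⁻¹ * m * α * β * γ)) = -s := by
    rw [← hnorm]; ring
  have c1b : (-(6 * (q : ℂ) ^ 4 * (lam3 q)⁻¹ * m * α * β * γ)) * m = -s := by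
    rw [← hnorm]; ring
  have cA : (-(((q : ℂ) ^ 2)⁻¹ * m * β)) *
      (2 * ((q : ℂ) ^ 4)⁻¹ * (lam2 q)⁻¹ * m * β * γ) = c2 := by
    rw [hc2, ← hnorm, hβ]; field_simp [hq, hl2, hl3]
  have cA' : (2 * ((q : ℂ) ^ 4)⁻¹ * (lam2 q)⁻¹ * m * β * γ) *
      (-(((q : ℂ) ^ 2)⁻¹ * m * β)) = c2 := by rw [← cA]; ring
  have cB : ((m : ℂ) * α) * (-(2 * (q : ℂ) ^ 6 * (lam2 q)⁻¹ * m * α * γ)) = c2 := by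
    rw [hc2, ← hnorm, hβ]; field_simp [hq, hl2, hl3]
  have cB' : (-(2 * (q : ℂ) ^ 6 * (lam2 q)⁻¹ * m * α * γ)) * ((m : ℂ) * α) = c2 := by
    rw [← cB]; ring
  have cC : ((m : ℂ) * γ) * (-(2 * (lam2 q)⁻¹ * m * α * β)) = c2 := by
    rw [hc2, ← hnorm, hβ]; field_simp [hq, hl2, hl3]
  have cC' : (-(2 * (lam2 q)⁻¹ * m * α * β)) * ((m : ℂ) * γ) = c2 := by
    rw [← cC]; ring
  -- eigenspaces
  have mem_E : ∀ (c : ℂ) (x : Lam q),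
      x ∈ LinearMap.ker (T ∘ₗ T - c • LinearMap.id) ↔ T (T x) = c • x := by
    intro c x
    rw [LinearMap.mem_ker, LinearMap.sub_apply, LinearMap.comp_apply, LinearMap.smul_apply,
      LinearMap.id_apply, sub_eq_zero]
  constructor
  · have hle : gradeL q 0 ⊔ gradeL q 3 ≤ LinearMap.ker (T ∘ₗ T - (-s) • LinearMap.id) := by
      apply sup_le
      · rw [HodgeAux.grade0_eq, Submodule.span_le, Set.singleton_subset_iff, SetLike.mem_coe,
          mem_E, h1, map_smul, hθ, smul_smul, c1a]
      · refine le_trans (HodgeAux.grade3_le q hq) ?_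
        rw [Submodule.span_le, Set.singleton_subset_iff, SetLike.mem_coe, mem_E, hθ, map_smul,
          h1, smul_smul, c1b]
    intro x hx
    exact (mem_E _ _).1 (hle hx)
  · have hle : gradeL q 1 ⊔ gradeL q 2 ≤ LinearMap.ker (T ∘ₗ T - c2 • LinearMap.id) := by
      apply sup_le
      · rw [HodgeAux.grade1_eq, Submodule.span_le]
        rintro _ ⟨i, rfl⟩
        rw [SetLike.mem_coe, mem_E]
        fin_cases i
        · rw [show ωL q ⟨0, by omega⟩ = ωL q 0 from rfl, hw0, map_smul, hfm, smul_smul, cA]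
        · rw [show ωL q ⟨1, by omega⟩ = ωL q 1 from rfl, hw1, map_smul, hfp, smul_smul, cB]
        · rw [show ωL q ⟨2, by omega⟩ = ωL q 2 from rfl, hw2, map_smul, hfz, smul_smul, cC]
      · refine le_trans (HodgeAux.grade2_le q hq) ?_
        rw [Submodule.span_le]
        rintro x hx
        simp only [Set.mem_insert_iff, Set.mem_singleton_iff] at hx
        rw [SetLike.mem_coe, mem_E]
        rcases hx with rfl | rfl | rfl
        · rw [hfm, map_smul, hw0, smul_smul, cA']
        · rw [hfp, map_smul, hw1, smul_smul, cB']
        · rw [hfz, map_smul, hw2, smul_smul, cC']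
    intro x hx
    exact (mem_E _ _).1 (hle hx)


end
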